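/- arXiv:2601.21333 — 4 statements merged into one kernel-verified Lean document; each statement's English description precedes it below -/
import Mathlib

section
/- Under the hypothesis ‖P_Ω(W)‖₁ ≤ ((1−ε)/2)‖W‖₁ for all W ∈ T, any pair (X*, Y*) with X*(Y*)ᵀ = L and rank(X*) = rank(Y*) = r is a Clarke critical point of f(X,Y) = ‖XYᵀ − (L+S)‖₁, i.e., there exists Λ ∈ sign(X*(Y*)ᵀ − M) (entrywise, with sign(0) = [−1,1]) such that ΛY* = 0 and ΛᵀX* = 0. -/
open Matrix

noncomputable def l1norm {m n : ℕ} (A : Matrix (Fin m) (Fin n) ℝ) : ℝ :=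
  ∑ i, ∑ j, |A i j|

open Classical in
/-- Coordinate projection onto entries in `Ω`. -/
noncomputable def projOn {m n : ℕ} (Ω : Set (Fin m × Fin n))
    (A : Matrix (Fin m) (Fin n) ℝ) : Matrix (Fin m) (Fin n) ℝ :=
  fun i j => if (i, j) ∈ Ω then A i j else 0

namespace ClarkeAux

noncomputable def ip {a b : ℕ} (A B : Matrix (Fin a) (Fin b) ℝ) : ℝ :=
  ∑ i, ∑ j, A i j * B i j

lemma ip_eq_trace {a b : ℕ} (A B : Matrix (Fin a) (Fin b) ℝ) :
    ip A B = Matrix.trace (A * Bᵀ) := by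
  simp [ip, Matrix.trace, Matrix.mul_apply, Matrix.diag]

lemma ip_self_nonneg {a b : ℕ} (A : Matrix (Fin a) (Fin b) ℝ) : 0 ≤ ip A A :=
  Finset.sum_nonneg fun i _ => Finset.sum_nonneg fun j _ => mul_self_nonneg _

lemma ip_self_eq_zero {a b : ℕ} {A : Matrix (Fin a) (Fin b) ℝ} (h : ip A A = 0) : A = 0 := by
  ext i j
  have h1 : ∀ i ∈ Finset.univ, (0:ℝ) ≤ ∑ j, A i j * A i j :=
    fun i _ => Finset.sum_nonneg fun j _ => mul_self_nonneg _
  have h2 := (Finset.sum_eq_zero_iff_of_nonneg h1).mp h i (Finset.mem_univ i)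
  have h3 := (Finset.sum_eq_zero_iff_of_nonneg
    (fun j _ => mul_self_nonneg (A i j))).mp h2 j (Finset.mem_univ j)
  simpa [mul_self_eq_zero] using h3

lemma ip_add_left {a b : ℕ} (A B C : Matrix (Fin a) (Fin b) ℝ) :
    ip (A + B) C = ip A C + ip B C := by
  simp [ip, Matrix.add_apply, add_mul, Finset.sum_add_distrib]

lemma ip_sub_right {a b : ℕ} (A B C : Matrix (Fin a) (Fin b) ℝ) :
    ip A (B - C) = ip A B - ip A C := by
  simp [ip, Matrix.sub_apply, mul_sub, Finset.sum_sub_distrib]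

lemma ip_self_add_smul {a b : ℕ} (t : ℝ) (P Q : Matrix (Fin a) (Fin b) ℝ) :
    ip (P + t • Q) (P + t • Q) = ip P P + 2 * t * ip P Q + t ^ 2 * ip Q Q := by
  have h : ∀ i j, (P + t • Q) i j * (P + t • Q) i j
      = P i j * P i j + 2 * t * (P i j * Q i j) + t ^ 2 * (Q i j * Q i j) := by
    intro i j
    simp only [Matrix.add_apply, Matrix.smul_apply, smul_eq_mul]
    ring
  simp only [ip, h, Finset.sum_add_distrib, Finset.mul_sum]

lemma ip_mul_right {a b c : ℕ} (A D : Matrix (Fin a) (Fin b) ℝ)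
    (Y : Matrix (Fin b) (Fin c) ℝ) :
    ip (A * Y) (D * Y) = ip (A * Y * Yᵀ) D := by
  rw [ip_eq_trace, ip_eq_trace, Matrix.transpose_mul, ← Matrix.mul_assoc, Matrix.mul_assoc]

lemma ip_transpose_mul {a b c : ℕ} (A D : Matrix (Fin a) (Fin b) ℝ)
    (X : Matrix (Fin a) (Fin c) ℝ) :
    ip (Aᵀ * X) (Dᵀ * X) = ip (X * Xᵀ * A) D := by
  rw [ip_eq_trace, ip_eq_trace, ← Matrix.trace_transpose (X * Xᵀ * A * Dᵀ)]
  rw [show (X * Xᵀ * A * Dᵀ)ᵀ = D * (Aᵀ * (X * Xᵀ)) from by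
    simp [Matrix.transpose_mul, Matrix.mul_assoc]]
  rw [show Aᵀ * X * (Dᵀ * X)ᵀ = Aᵀ * (X * Xᵀ) * D from by
    simp [Matrix.transpose_mul, Matrix.mul_assoc]]
  exact Matrix.trace_mul_comm _ _

lemma mul_sign_self (x : ℝ) : x * Real.sign x = |x| := by
  rcases lt_trichotomy x 0 with h | h | h
  · rw [Real.sign_of_neg h, abs_of_neg h]; ring
  · simp [h]
  · rw [Real.sign_of_pos h, abs_of_pos h]; ring

lemma abs_sign_le_one (x : ℝ) : |Real.sign x| ≤ 1 := by
  rcases lt_trichotomy x 0 with h | h | h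
  · rw [Real.sign_of_neg h]; norm_num
  · simp [h]
  · rw [Real.sign_of_pos h]; norm_num

lemma opt_aux (g qd qs t : ℝ) (hg : g < 0) (ht0 : 0 < t)
    (ht2 : t * (qd + 1) ≤ -g) (hge : qs ≤ qs + 2 * t * g + t ^ 2 * qd) : False := by
  nlinarith [mul_le_mul_of_nonneg_left ht2 ht0.le, mul_pos ht0 ht0,
    mul_neg_of_pos_of_neg ht0 hg]

lemma col_absorb {a b c d : ℕ} (U : Matrix (Fin a) (Fin c) ℝ) (hU : Uᵀ * U = 1)
    (X : Matrix (Fin a) (Fin d) ℝ) (L : Matrix (Fin a) (Fin b) ℝ)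
    (B : Matrix (Fin d) (Fin b) ℝ) (C : Matrix (Fin c) (Fin b) ℝ)
    (hL1 : L = X * B) (hL2 : L = U * C) (hr : X.rank ≤ L.rank) :
    U * (Uᵀ * X) = X := by
  have h1 : LinearMap.range L.mulVecLin ≤ LinearMap.range X.mulVecLin := by
    rw [hL1, Matrix.mulVecLin_mul]; exact LinearMap.range_comp_le_range _ _
  have h2 : LinearMap.range L.mulVecLin = LinearMap.range X.mulVecLin := by
    apply Submodule.eq_of_le_of_finrank_le h1
    unfold Matrix.rank at hr
    exact hr
  have h3 : LinearMap.range X.mulVecLin ≤ LinearMap.range U.mulVecLin := by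
    rw [← h2, hL2, Matrix.mulVecLin_mul]; exact LinearMap.range_comp_le_range _ _
  have key : ∀ v : Fin d → ℝ, (U * Uᵀ) *ᵥ (X *ᵥ v) = X *ᵥ v := by
    intro v
    obtain ⟨y, hy⟩ := h3 (LinearMap.mem_range_self _ v)
    rw [Matrix.mulVecLin_apply, Matrix.mulVecLin_apply] at hy
    rw [← hy, Matrix.mulVec_mulVec, Matrix.mul_assoc, hU, Matrix.mul_one]
  have key2 : U * Uᵀ * X = X := by
    ext i j
    have h := congrFun (key (Pi.single j 1)) i
    rw [Matrix.mulVec_mulVec] at h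
    simpa [Matrix.mulVec_single] using h
  rw [← Matrix.mul_assoc, key2]

end ClarkeAux

set_option maxHeartbeats 2000000 in
open ClarkeAux in
/-- under the restricted ℓ¹ bound on the tangent space `T`, any true
factorization `(X⋆, Y⋆)` with `X⋆ Y⋆ᵀ = L` and `rank X⋆ = rank Y⋆ = r` is a Clarke
critical point of `f(X,Y) = ‖XYᵀ - M‖₁`: there is `Λ ∈ sign(X⋆Y⋆ᵀ - M)` (entrywise,
with `sign 0 = [-1,1]`) such that `ΛY⋆ = 0` and `ΛᵀX⋆ = 0`. -/
theorem true_factorization_is_clarke_critical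
    {m n r k : ℕ}
    (U : Matrix (Fin m) (Fin r) ℝ) (Sig : Matrix (Fin r) (Fin r) ℝ)
    (V : Matrix (Fin n) (Fin r) ℝ)
    (hU : Uᵀ * U = 1) (hV : Vᵀ * V = 1)
    (L : Matrix (Fin m) (Fin n) ℝ)
    (hL : L = U * Sig * Vᵀ) (hrank : L.rank = r)
    (Ω : Set (Fin m × Fin n))
    (ε : ℝ) (hε : 0 < ε)
    (hbound : ∀ (H : Matrix (Fin m) (Fin r) ℝ) (K : Matrix (Fin n) (Fin r) ℝ),
      l1norm (projOn Ω (H * Vᵀ + U * Kᵀ)) ≤ (1 - ε) / 2 * l1norm (H * Vᵀ + U * Kᵀ))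
    (S : Matrix (Fin m) (Fin n) ℝ)
    (hS : ∀ i j, (i, j) ∉ Ω → S i j = 0)
    (M : Matrix (Fin m) (Fin n) ℝ) (hM : M = L + S)
    (Xs : Matrix (Fin m) (Fin k) ℝ) (Ys : Matrix (Fin n) (Fin k) ℝ)
    (hXY : Xs * Ysᵀ = L) (hX : Xs.rank = r) (hY : Ys.rank = r) :
    ∃ Λ : Matrix (Fin m) (Fin n) ℝ,
      (∀ i j, ((Xs * Ysᵀ - M) i j ≠ 0 → Λ i j = Real.sign ((Xs * Ysᵀ - M) i j)) ∧
              ((Xs * Ysᵀ - M) i j = 0 → |Λ i j| ≤ 1)) ∧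
      Λ * Ys = 0 ∧ Λᵀ * Xs = 0 := by
  classical
  -- the constraint set
  set C : Set (Matrix (Fin m) (Fin n) ℝ) :=
    {Λ | ∀ i j, (S i j ≠ 0 → Λ i j = Real.sign (-S i j)) ∧ (S i j = 0 → |Λ i j| ≤ 1)} with hCdef
  have hCne : C.Nonempty := by
    refine ⟨fun i j => Real.sign (-S i j), fun i j => ⟨fun _ => rfl, fun hs => by
      simp [hs]⟩⟩
  have hCcomp : IsCompact C := by
    have hCeq : C = Set.univ.pi (fun i => Set.univ.pi (fun j =>
        if S i j = 0 then Set.Icc (-1:ℝ) 1 else {Real.sign (-S i j)})) := by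
      ext Λ
      refine Iff.trans ?_ (Set.mem_univ_pi (f := (Λ : Fin m → Fin n → ℝ))).symm
      simp only [hCdef, Set.mem_setOf_eq]
      constructor
      · intro h i
        rw [Set.mem_univ_pi]
        intro j
        by_cases hs : S i j = 0
        · have := abs_le.mp ((h i j).2 hs)
          simp [hs, Set.mem_Icc, this.1, this.2]
        · simp [hs, (h i j).1 hs]
      · intro h i j
        have hij := h i
        rw [Set.mem_univ_pi] at hij
        have hij := hij j
        by_cases hs : S i j = 0
        · simp only [hs, if_true, Set.mem_Icc] at hij
          exact ⟨fun hc => absurd hs hc, fun _ => abs_le.mpr hij⟩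
        · simp only [hs, if_false, Set.mem_singleton_iff] at hij
          exact ⟨fun _ => hij, fun hc => absurd hc hs⟩
    rw [hCeq]
    exact isCompact_univ_pi fun i => isCompact_univ_pi fun j => by
      by_cases hs : S i j = 0
      · simp only [hs, if_true]; exact isCompact_Icc
      · simp only [hs, if_false]; exact isCompact_singleton
  -- the quadratic objective
  set q : Matrix (Fin m) (Fin n) ℝ → ℝ :=
    fun Λ => ip (Λ * Ys) (Λ * Ys) + ip (Λᵀ * Xs) (Λᵀ * Xs) with hqdef
  have hqcont : Continuous q := by
    have h1 : Continuous fun Λ : Matrix (Fin m) (Fin n) ℝ => Λ * Ys :=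
      continuous_id.matrix_mul continuous_const
    have h2 : Continuous fun Λ : Matrix (Fin m) (Fin n) ℝ => Λᵀ * Xs :=
      continuous_id.matrix_transpose.matrix_mul continuous_const
    apply Continuous.add
    · exact continuous_finset_sum _ fun i _ => continuous_finset_sum _ fun c _ =>
        (h1.matrix_elem i c).mul (h1.matrix_elem i c)
    · exact continuous_finset_sum _ fun i _ => continuous_finset_sum _ fun c _ =>
        (h2.matrix_elem i c).mul (h2.matrix_elem i c)
  obtain ⟨Λs, hΛsC, hmin⟩ := hCcomp.exists_isMinOn hCne hqcont.continuousOn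
  have hq_nonneg : ∀ A, 0 ≤ q A := fun A =>
    add_nonneg (ip_self_nonneg _) (ip_self_nonneg _)
  -- the "gradient" of q at the minimizer
  set G : Matrix (Fin m) (Fin n) ℝ := Λs * Ys * Ysᵀ + Xs * Xsᵀ * Λs with hGdef
  -- expansion of q along a direction
  have hexp : ∀ (t : ℝ) (D : Matrix (Fin m) (Fin n) ℝ),
      q (Λs + t • D) = q Λs + 2 * t * ip G D + t ^ 2 * q D := by
    intro t D
    have e1 : (Λs + t • D) * Ys = Λs * Ys + t • (D * Ys) := by
      rw [Matrix.add_mul, Matrix.smul_mul]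
    have e2 : (Λs + t • D)ᵀ * Xs = Λsᵀ * Xs + t • (Dᵀ * Xs) := by
      rw [Matrix.transpose_add, Matrix.transpose_smul, Matrix.add_mul, Matrix.smul_mul]
    simp only [hqdef, hGdef]
    rw [e1, e2, ip_self_add_smul, ip_self_add_smul, ip_mul_right Λs D Ys,
      ip_transpose_mul Λs D Xs, ip_add_left]
    ring
  have hGΛs : ip G Λs = q Λs := by
    simp only [hGdef, hqdef, ip_add_left, ← ip_mul_right, ← ip_transpose_mul]
  -- first-order optimality
  have hopt : ∀ Λ ∈ C, 0 ≤ ip G (Λ - Λs) := by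
    intro Λ hΛ
    by_contra hneg
    push_neg at hneg
    set D : Matrix (Fin m) (Fin n) ℝ := Λ - Λs with hDdef
    set t : ℝ := min 1 (-(ip G D) / (q D + 1)) with htdef
    have hqD : 0 ≤ q D := hq_nonneg D
    have ht0 : 0 < t := lt_min one_pos (div_pos (neg_pos.mpr hneg) (by linarith))
    have ht1 : t ≤ 1 := min_le_left _ _
    have ht2 : t * (q D + 1) ≤ -(ip G D) := by
      rw [← div_mul_cancel₀ (-(ip G D)) (show q D + 1 ≠ 0 by positivity)]
      exact mul_le_mul_of_nonneg_right (min_le_right _ _) (by linarith)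
    have hmem : Λs + t • D ∈ C := by
      intro i j
      obtain ⟨ha1, ha2⟩ := hΛsC i j
      obtain ⟨hb1, hb2⟩ := hΛ i j
      constructor
      · intro hs
        simp only [Matrix.add_apply, Matrix.smul_apply, hDdef, Matrix.sub_apply,
          smul_eq_mul, ha1 hs, hb1 hs]
        ring
      · intro hs
        have hA := abs_le.mp (ha2 hs)
        have hB := abs_le.mp (hb2 hs)
        rw [abs_le]
        simp only [Matrix.add_apply, Matrix.smul_apply, hDdef, Matrix.sub_apply, smul_eq_mul]
        constructor <;> nlinarith [hA.1, hA.2, hB.1, hB.2]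
    have hge := isMinOn_iff.mp hmin _ hmem
    rw [hexp t D] at hge
    exact opt_aux (ip G D) (q D) (q Λs) t hneg ht0 ht2 hge
  -- the comparison point
  set Λ' : Matrix (Fin m) (Fin n) ℝ :=
    fun i j => if S i j = 0 then -Real.sign (G i j) else Real.sign (-S i j) with hΛ'def
  have hΛ'C : Λ' ∈ C := by
    intro i j
    constructor
    · intro hs; simp [hΛ'def, hs]
    · intro hs
      simp only [hΛ'def, hs, if_true, abs_neg]
      exact abs_sign_le_one _
  -- column space absorption
  have hXsU : U * (Uᵀ * Xs) = Xs :=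
    col_absorb U hU Xs L Ysᵀ (Sig * Vᵀ) hXY.symm (by rw [hL, Matrix.mul_assoc])
      (le_of_eq (by rw [hX, hrank]))
  have hYsV : V * (Vᵀ * Ys) = Ys := by
    refine col_absorb V hV Ys Lᵀ Xsᵀ (Sigᵀ * Uᵀ) ?_ ?_ ?_
    · rw [← hXY, Matrix.transpose_mul, Matrix.transpose_transpose]
    · rw [hL]; simp [Matrix.transpose_mul, Matrix.mul_assoc]
    · exact le_of_eq (by rw [hY, Matrix.rank_transpose, hrank])
  -- G lies in the tangent space
  have eV : (Λs * Ys * (Vᵀ * Ys)ᵀ) * Vᵀ = Λs * Ys * Ysᵀ := by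
    calc (Λs * Ys * (Vᵀ * Ys)ᵀ) * Vᵀ = Λs * Ys * ((Vᵀ * Ys)ᵀ * Vᵀ) := by
          simp only [Matrix.mul_assoc]
      _ = Λs * Ys * ((V * (Vᵀ * Ys))ᵀ) := by rw [Matrix.transpose_mul V (Vᵀ * Ys)]
      _ = Λs * Ys * Ysᵀ := by rw [hYsV]
  have eU : U * (Uᵀ * Xs * Xsᵀ * Λs) = Xs * Xsᵀ * Λs := by
    calc U * (Uᵀ * Xs * Xsᵀ * Λs) = U * (Uᵀ * Xs) * Xsᵀ * Λs := by
          simp only [Matrix.mul_assoc]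
      _ = Xs * Xsᵀ * Λs := by rw [hXsU]
  have hGT : G = (Λs * Ys * (Vᵀ * Ys)ᵀ) * Vᵀ + U * ((Uᵀ * Xs * Xsᵀ * Λs)ᵀ)ᵀ := by
    rw [hGdef, Matrix.transpose_transpose, eV, eU]
  -- ℓ¹ bounds
  have hl1G : 0 ≤ l1norm G :=
    Finset.sum_nonneg fun i _ => Finset.sum_nonneg fun j _ => abs_nonneg _
  have hproj : 2 * l1norm (projOn Ω G) ≤ (1 - ε) * l1norm G := by
    have := hbound (Λs * Ys * (Vᵀ * Ys)ᵀ) ((Uᵀ * Xs * Xsᵀ * Λs)ᵀ)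
    rw [← hGT] at this
    linarith
  -- entrywise bound on ⟨G, Λ'⟩
  have hsum : ip G Λ' ≤ 2 * l1norm (projOn Ω G) - l1norm G := by
    have hent : ∀ i j, G i j * Λ' i j ≤ 2 * |projOn Ω G i j| - |G i j| := by
      intro i j
      by_cases hs : S i j = 0
      · have he : G i j * Λ' i j = -|G i j| := by
          simp only [hΛ'def, hs, if_true, mul_neg, mul_sign_self]
        rw [he]
        have := abs_nonneg (projOn Ω G i j)
        linarith
      · have hΩ : (i, j) ∈ Ω := by
          by_contra hn; exact hs (hS i j hn)
        have h1 : G i j * Λ' i j ≤ |G i j| := by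
          refine le_trans (le_abs_self _) ?_
          rw [abs_mul]
          refine mul_le_of_le_one_right (abs_nonneg _) ?_
          simp only [hΛ'def, hs, if_false]
          exact abs_sign_le_one _
        have h2 : |projOn Ω G i j| = |G i j| := by simp [projOn, hΩ]
        linarith
    calc ip G Λ' = ∑ i, ∑ j, G i j * Λ' i j := rfl
      _ ≤ ∑ i, ∑ j, (2 * |projOn Ω G i j| - |G i j|) :=
          Finset.sum_le_sum fun i _ => Finset.sum_le_sum fun j _ => hent i j
      _ = 2 * l1norm (projOn Ω G) - l1norm G := by
          simp [l1norm, Finset.sum_sub_distrib, Finset.mul_sum]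
  -- conclude q Λs ≤ 0
  have hq0 : q Λs ≤ 0 := by
    have h1 := hopt Λ' hΛ'C
    rw [ip_sub_right] at h1
    have h2 : q Λs ≤ ip G Λ' := by rw [← hGΛs]; linarith
    linarith [mul_nonneg hε.le hl1G]
  have hy0 : Λs * Ys = 0 := by
    apply ip_self_eq_zero
    have := ip_self_nonneg (Λs * Ys)
    have := ip_self_nonneg (Λsᵀ * Xs)
    simp only [hqdef] at hq0
    linarith
  have hx0 : Λsᵀ * Xs = 0 := by
    apply ip_self_eq_zero
    have := ip_self_nonneg (Λs * Ys)
    have := ip_self_nonneg (Λsᵀ * Xs)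
    simp only [hqdef] at hq0
    linarith
  have hdiff : Xs * Ysᵀ - M = -S := by
    rw [hXY, hM]; abel
  refine ⟨Λs, fun i j => ?_, hy0, hx0⟩
  obtain ⟨h1, h2⟩ := hΛsC i j
  rw [hdiff]
  constructor
  · intro hne
    have hs : S i j ≠ 0 := by simpa [Matrix.neg_apply, neg_eq_zero] using hne
    simpa [Matrix.neg_apply] using h1 hs
  · intro h0
    exact h2 (by simpa [Matrix.neg_apply, neg_eq_zero] using h0)
end

section
/- Let W = {W ∈ T : ‖W‖₁ = 1}, where T is the tangent space of a μ-incoherent rank-r matrix. Then the Frobenius diameter of W is at most 2√(μr(1/m + 1/n)) and its ℓ∞ (entrywise) diameter is at most 2μr(1/m + 1/n). -/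
open Matrix

-- |gram entry| ≤ β from incoherence
lemma gram_abs_le {n r : ℕ} (V : Matrix (Fin n) (Fin r) ℝ) (β : ℝ)
    (hinc : ∀ j, ∑ c, (V j c) ^ 2 ≤ β) (hβ : 0 ≤ β) (l j : Fin n) :
    |∑ c, V l c * V j c| ≤ β := by
  have cs := Finset.sum_mul_sq_le_sq_mul_sq Finset.univ (V l) (V j)
  have h1 := hinc l
  have h2 := hinc j
  have hn1 : (0:ℝ) ≤ ∑ c, (V l c) ^ 2 := Finset.sum_nonneg fun _ _ => sq_nonneg _
  have hn2 : (0:ℝ) ≤ ∑ c, (V j c) ^ 2 := Finset.sum_nonneg fun _ _ => sq_nonneg _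
  nlinarith [sq_abs (∑ c, V l c * V j c), abs_nonneg (∑ c, V l c * V j c)]

-- |gram entry| ≤ 1 from orthonormality
lemma gram_abs_le_one {n r : ℕ} (V : Matrix (Fin n) (Fin r) ℝ)
    (hV : Vᵀ * V = 1) (l j : Fin n) :
    |∑ c, V l c * V j c| ≤ 1 := by
  set q : Fin n → Fin n → ℝ := fun a b => ∑ c, V a c * V b c with hq
  have hsym : ∀ a b, q a b = q b a := by
    intro a b; simp only [hq]; exact Finset.sum_congr rfl fun c _ => mul_comm _ _
  have hQQ : ∀ a b, (∑ p, q a p * q p b) = q a b := by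
    intro a b
    have : (V * Vᵀ) * (V * Vᵀ) = V * Vᵀ := by
      rw [Matrix.mul_assoc, ← Matrix.mul_assoc Vᵀ V, hV, Matrix.one_mul]
    have := congrFun (congrFun this a) b
    simpa [Matrix.mul_apply, Matrix.transpose_apply, hq] using this
  have hdiag0 : ∀ a, 0 ≤ q a a := by
    intro a
    exact Finset.sum_nonneg fun c _ => mul_self_nonneg _
  have hdiag1 : ∀ a, q a a ≤ 1 := by
    intro a
    have h1 : q a a = ∑ p, (q a p) ^ 2 := by
      rw [← hQQ a a]
      exact Finset.sum_congr rfl fun p _ => by rw [hsym p a]; ring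
    have h2 : (q a a) ^ 2 ≤ ∑ p, (q a p) ^ 2 :=
      Finset.single_le_sum (f := fun p => (q a p)^2) (fun p _ => sq_nonneg _) (Finset.mem_univ a)
    nlinarith [hdiag0 a]
  have cs : (q l j) ^ 2 ≤ q l l * q j j := by
    have := Finset.sum_mul_sq_le_sq_mul_sq Finset.univ (fun p => q l p) (fun p => q p j)
    rw [hQQ l j] at this
    calc (q l j)^2 ≤ (∑ p, (q l p)^2) * ∑ p, (q p j)^2 := this
      _ = q l l * q j j := by
          congr 1
          · rw [← hQQ l l]; exact Finset.sum_congr rfl fun p _ => by rw [hsym p l]; ring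
          · rw [← hQQ j j]; exact Finset.sum_congr rfl fun p _ => by rw [hsym p j]; ring
  have h1 : (q l j) ^ 2 ≤ 1 := le_trans cs (by nlinarith [hdiag0 l, hdiag1 l, hdiag0 j, hdiag1 j])
  nlinarith [sq_abs (q l j), abs_nonneg (q l j)]

lemma entry_bound {m n r : ℕ} (hm : 0 < m) (hn : 0 < n) (μ : ℝ)
    (U : Matrix (Fin m) (Fin r) ℝ) (V : Matrix (Fin n) (Fin r) ℝ)
    (hU : Uᵀ * U = 1) (hV : Vᵀ * V = 1)
    (hUinc : ∀ i, ∑ c, (U i c) ^ 2 ≤ μ * r / m)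
    (hVinc : ∀ j, ∑ c, (V j c) ^ 2 ≤ μ * r / n)
    (W : Matrix (Fin m) (Fin n) ℝ)
    (hW : ∃ (H : Matrix (Fin m) (Fin r) ℝ) (K : Matrix (Fin n) (Fin r) ℝ),
        W = H * Vᵀ + U * Kᵀ)
    (hW1 : l1norm W = 1) (i : Fin m) (j : Fin n) :
    |W i j| ≤ μ * r / m + μ * r / n := by
  have hα : 0 ≤ μ * r / m :=
    le_trans (Finset.sum_nonneg fun c _ => sq_nonneg _) (hUinc ⟨0, hm⟩)
  have hβ : 0 ≤ μ * r / n :=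
    le_trans (Finset.sum_nonneg fun c _ => sq_nonneg _) (hVinc ⟨0, hn⟩)
  obtain ⟨H, K, hWeq⟩ := hW
  have e1 : (U * Uᵀ) * (U * Kᵀ) = U * Kᵀ := by
    rw [Matrix.mul_assoc, ← Matrix.mul_assoc Uᵀ U Kᵀ, hU, Matrix.one_mul]
  have e2 : (H * Vᵀ) * (V * Vᵀ) = H * Vᵀ := by
    rw [Matrix.mul_assoc, ← Matrix.mul_assoc Vᵀ V Vᵀ, hV, Matrix.one_mul]
  have hM : (U * Uᵀ) * W + W * (V * Vᵀ) - (U * Uᵀ) * W * (V * Vᵀ) = W := by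
    rw [hWeq, Matrix.mul_add, Matrix.add_mul, e1, e2, Matrix.add_mul,
      Matrix.mul_assoc (U * Uᵀ) (H * Vᵀ) (V * Vᵀ), e2]
    abel
  have h := congrFun (congrFun hM i) j
  simp only [Matrix.mul_apply, Matrix.add_apply, Matrix.sub_apply,
    Matrix.transpose_apply] at h
  set p : Fin m → ℝ := fun k => ∑ c, U i c * U k c with hp
  set q : Fin n → ℝ := fun l => ∑ c, V l c * V j c with hq
  have key : W i j =
      (∑ k, ∑ l, p k * (W k l * ((if l = j then (1:ℝ) else 0) - q l))) +
      ∑ l, W i l * q l := by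
    rw [← h]
    have t1 : (∑ k, ∑ l, p k * (W k l * ((if l = j then (1:ℝ) else 0) - q l)))
        = (∑ k, p k * W k j) - ∑ l, (∑ k, p k * W k l) * q l := by
      simp only [mul_sub, Finset.sum_sub_distrib]
      congr 1
      · simp
      · simp only [Finset.sum_mul, mul_assoc]
        rw [Finset.sum_comm]
    rw [t1]; ring
  -- bound the two pieces
  have hrow : ∑ l, |W i l| ≤ 1 := by
    rw [← hW1]
    exact Finset.single_le_sum (f := fun a => ∑ l, |W a l|)
      (fun a _ => Finset.sum_nonneg fun l _ => abs_nonneg _) (Finset.mem_univ i)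
  have hterm : ∀ k l, |p k * (W k l * ((if l = j then (1:ℝ) else 0) - q l))|
      ≤ (μ * r / m) * |W k l| := by
    intro k l
    have h1 : |p k| ≤ μ * r / m := gram_abs_le U (μ * r / m) hUinc hα i k
    have h2 : |(if l = j then (1:ℝ) else 0) - q l| ≤ 1 := by
      by_cases hl : l = j
      · subst hl
        have h0 : 0 ≤ q l := Finset.sum_nonneg fun c _ => mul_self_nonneg _
        have h1' := (abs_le.mp (gram_abs_le_one V hV l l)).2
        rw [if_pos rfl, abs_le]
        constructor <;> [linarith; linarith]
      · rw [if_neg hl, zero_sub, abs_neg]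
        exact gram_abs_le_one V hV l j
    calc |p k * (W k l * ((if l = j then (1:ℝ) else 0) - q l))|
        = |p k| * (|W k l| * |(if l = j then (1:ℝ) else 0) - q l|) := by
          rw [abs_mul, abs_mul]
      _ ≤ (μ * r / m) * (|W k l| * 1) := by
          gcongr
      _ = (μ * r / m) * |W k l| := by ring
  have hS1 : |∑ k, ∑ l, p k * (W k l * ((if l = j then (1:ℝ) else 0) - q l))|
      ≤ μ * r / m := by
    calc |∑ k, ∑ l, p k * (W k l * ((if l = j then (1:ℝ) else 0) - q l))|
        ≤ ∑ k, ∑ l, |p k * (W k l * ((if l = j then (1:ℝ) else 0) - q l))| := by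
          refine le_trans (Finset.abs_sum_le_sum_abs _ _) ?_
          exact Finset.sum_le_sum fun k _ => Finset.abs_sum_le_sum_abs _ _
      _ ≤ ∑ k, ∑ l, (μ * r / m) * |W k l| :=
          Finset.sum_le_sum fun k _ => Finset.sum_le_sum fun l _ => hterm k l
      _ = (μ * r / m) * l1norm W := by
          simp only [l1norm, Finset.mul_sum]
      _ = μ * r / m := by rw [hW1, mul_one]
  have hS2 : |∑ l, W i l * q l| ≤ μ * r / n := by
    calc |∑ l, W i l * q l| ≤ ∑ l, |W i l * q l| := Finset.abs_sum_le_sum_abs _ _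
      _ ≤ ∑ l, |W i l| * (μ * r / n) := by
          refine Finset.sum_le_sum fun l _ => ?_
          rw [abs_mul]
          exact mul_le_mul_of_nonneg_left (gram_abs_le V (μ * r / n) hVinc hβ l j)
            (abs_nonneg _)
      _ = (∑ l, |W i l|) * (μ * r / n) := by rw [Finset.sum_mul]
      _ ≤ 1 * (μ * r / n) := mul_le_mul_of_nonneg_right hrow hβ
      _ = μ * r / n := one_mul _
  calc |W i j| ≤ |∑ k, ∑ l, p k * (W k l * ((if l = j then (1:ℝ) else 0) - q l))|
        + |∑ l, W i l * q l| := key ▸ abs_add_le _ _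
    _ ≤ μ * r / m + μ * r / n := add_le_add hS1 hS2

/-- diameter bounds for `𝒲 = {W ∈ T : ‖W‖₁ = 1}`: the Frobenius
diameter is at most `2√(μr(1/m + 1/n))` and the entrywise `ℓ∞` diameter is at
most `2μr(1/m + 1/n)`. -/
theorem diameter_bounds
    {m n r : ℕ} (hm : 0 < m) (hn : 0 < n) (μ : ℝ)
    (U : Matrix (Fin m) (Fin r) ℝ) (V : Matrix (Fin n) (Fin r) ℝ)
    (hU : Uᵀ * U = 1) (hV : Vᵀ * V = 1)
    (hUinc : ∀ i, ∑ c, (U i c) ^ 2 ≤ μ * r / m)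
    (hVinc : ∀ j, ∑ c, (V j c) ^ 2 ≤ μ * r / n)
    (W W' : Matrix (Fin m) (Fin n) ℝ)
    (hW : ∃ (H : Matrix (Fin m) (Fin r) ℝ) (K : Matrix (Fin n) (Fin r) ℝ),
        W = H * Vᵀ + U * Kᵀ)
    (hW' : ∃ (H : Matrix (Fin m) (Fin r) ℝ) (K : Matrix (Fin n) (Fin r) ℝ),
        W' = H * Vᵀ + U * Kᵀ)
    (hW1 : l1norm W = 1) (hW'1 : l1norm W' = 1) :
    Real.sqrt (∑ i, ∑ j, (W i j - W' i j) ^ 2)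
        ≤ 2 * Real.sqrt (μ * r * (1 / m + 1 / n)) ∧
    ∀ i j, |W i j - W' i j| ≤ 2 * (μ * r) * (1 / m + 1 / n) := by
  have hα : 0 ≤ μ * r / m :=
    le_trans (Finset.sum_nonneg fun c _ => sq_nonneg _) (hUinc ⟨0, hm⟩)
  have hβ : 0 ≤ μ * r / n :=
    le_trans (Finset.sum_nonneg fun c _ => sq_nonneg _) (hVinc ⟨0, hn⟩)
  have hE := entry_bound hm hn μ U V hU hV hUinc hVinc W hW hW1
  have hE' := entry_bound hm hn μ U V hU hV hUinc hVinc W' hW' hW'1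
  set C := μ * r / m + μ * r / n with hCdef
  have hC : 0 ≤ C := add_nonneg hα hβ
  have hCeq : μ * r * (1 / m + 1 / n) = C := by rw [hCdef]; ring
  have hsq : ∀ (X : Matrix (Fin m) (Fin n) ℝ), l1norm X = 1 →
      (∀ i j, |X i j| ≤ C) → ∑ i, ∑ j, (X i j) ^ 2 ≤ C := by
    intro X h1 hX
    calc ∑ i, ∑ j, (X i j) ^ 2 ≤ ∑ i, ∑ j, C * |X i j| := by
          refine Finset.sum_le_sum fun i _ => Finset.sum_le_sum fun j _ => ?_
          rw [← sq_abs, sq]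
          exact mul_le_mul_of_nonneg_right (hX i j) (abs_nonneg _)
      _ = C * l1norm X := by simp [l1norm, Finset.mul_sum]
      _ = C := by rw [h1, mul_one]
  constructor
  · have h4 : ∑ i, ∑ j, (W i j - W' i j) ^ 2 ≤ 4 * C := by
      calc ∑ i, ∑ j, (W i j - W' i j) ^ 2
          ≤ ∑ i, ∑ j, (2 * (W i j) ^ 2 + 2 * (W' i j) ^ 2) := by
            refine Finset.sum_le_sum fun i _ => Finset.sum_le_sum fun j _ => ?_
            nlinarith [sq_nonneg (W i j + W' i j)]
        _ = 2 * (∑ i, ∑ j, (W i j) ^ 2) + 2 * (∑ i, ∑ j, (W' i j) ^ 2) := by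
            simp [Finset.sum_add_distrib, Finset.mul_sum]
        _ ≤ 2 * C + 2 * C := by
            have := hsq W hW1 hE
            have := hsq W' hW'1 hE'
            linarith
        _ = 4 * C := by ring
    calc Real.sqrt (∑ i, ∑ j, (W i j - W' i j) ^ 2)
        ≤ Real.sqrt (4 * C) := Real.sqrt_le_sqrt h4
      _ = 2 * Real.sqrt (μ * r * (1 / m + 1 / n)) := by
          rw [hCeq, show (4:ℝ) = 2 ^ 2 by norm_num,
            Real.sqrt_mul (by positivity) C, Real.sqrt_sq (by norm_num)]
  · intro i j
    have h1 : |W i j - W' i j| ≤ |W i j| + |W' i j| := by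
      rw [sub_eq_add_neg]
      exact (abs_add_le _ _).trans (by rw [abs_neg])
    have h2 : C + C = 2 * (μ * r) * (1 / m + 1 / n) := by rw [hCdef]; ring
    rw [← h2]
    exact h1.trans (add_le_add (hE i j) (hE' i j))
end

section
/- Every W ∈ T with ‖W‖₁ ≤ 1 decomposes as W = HVᵀ + UKᵀ − UZVᵀ with H = WV, Kᵀ = UᵀW, Z = UᵀWV, satisfying ‖H‖_{2,1} ≤ √(μr/n), ‖K‖_{2,1} ≤ √(μr/m), and ‖Z‖_F ≤ μr/√(mn), where ‖A‖_{2,1} denotes the sum of the ℓ₂ norms of the rows of A. -/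
open Matrix

/-- Sum of the ℓ₂ norms of the rows of `A` (the `(2,1)`-norm). -/
noncomputable def norm21 {m r : ℕ} (A : Matrix (Fin m) (Fin r) ℝ) : ℝ :=
  ∑ i, Real.sqrt (∑ c, (A i c) ^ 2)

lemma sqrt_sum_sq_eq_norm {ι : Type*} [Fintype ι] (x : ι → ℝ) :
    Real.sqrt (∑ c, x c ^ 2) = ‖(WithLp.equiv 2 (ι → ℝ)).symm x‖ := by
  rw [EuclideanSpace.norm_eq]
  congr 1
  exact Finset.sum_congr rfl fun c _ => by simp [Real.norm_eq_abs, sq_abs]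

lemma sqrt_sum_sq_sum_le {ι κ : Type*} [Fintype ι] (s : Finset κ) (g : κ → ι → ℝ) :
    Real.sqrt (∑ c, (∑ j ∈ s, g j c) ^ 2) ≤ ∑ j ∈ s, Real.sqrt (∑ c, (g j c) ^ 2) := by
  calc Real.sqrt (∑ c, (∑ j ∈ s, g j c) ^ 2)
      = ‖(WithLp.equiv 2 (ι → ℝ)).symm (∑ j ∈ s, g j)‖ := by
        rw [← sqrt_sum_sq_eq_norm]
        congr 1
        exact Finset.sum_congr rfl fun c _ => by rw [Finset.sum_apply]
    _ = ‖∑ j ∈ s, (WithLp.equiv 2 (ι → ℝ)).symm (g j)‖ := by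
        congr 1
        exact map_sum (WithLp.linearEquiv 2 ℝ (ι → ℝ)).symm g s
    _ ≤ ∑ j ∈ s, ‖(WithLp.equiv 2 (ι → ℝ)).symm (g j)‖ := norm_sum_le s _
    _ = ∑ j ∈ s, Real.sqrt (∑ c, (g j c) ^ 2) :=
        Finset.sum_congr rfl fun j _ => (sqrt_sum_sq_eq_norm (g j)).symm

lemma sqrt_sum_sq_mul {ι : Type*} [Fintype ι] (a : ℝ) (x : ι → ℝ) :
    Real.sqrt (∑ c, (a * x c) ^ 2) = |a| * Real.sqrt (∑ c, x c ^ 2) := by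
  rw [show ∑ c, (a * x c) ^ 2 = a ^ 2 * ∑ c, x c ^ 2 by rw [Finset.mul_sum]; ring_nf,
    Real.sqrt_mul (sq_nonneg a), Real.sqrt_sq_eq_abs]

/-- every `W ∈ T` with `‖W‖₁ ≤ 1` decomposes as
`W = HVᵀ + UKᵀ - UZVᵀ` with `H = WV`, `Kᵀ = UᵀW`, `Z = UᵀWV`, where
`‖H‖₂,₁ ≤ √(μr/n)`, `‖K‖₂,₁ ≤ √(μr/m)` and `‖Z‖_F ≤ μr/√(mn)`. -/
theorem tangent_decomposition
    {m n r : ℕ} (hm : 0 < m) (hn : 0 < n) (μ : ℝ)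
    (U : Matrix (Fin m) (Fin r) ℝ) (V : Matrix (Fin n) (Fin r) ℝ)
    (hU : Uᵀ * U = 1) (hV : Vᵀ * V = 1)
    (hUinc : ∀ i, ∑ c, (U i c) ^ 2 ≤ μ * r / m)
    (hVinc : ∀ j, ∑ c, (V j c) ^ 2 ≤ μ * r / n)
    (W : Matrix (Fin m) (Fin n) ℝ)
    (hW : ∃ (H : Matrix (Fin m) (Fin r) ℝ) (K : Matrix (Fin n) (Fin r) ℝ),
        W = H * Vᵀ + U * Kᵀ)
    (hW1 : l1norm W ≤ 1) :
    let H : Matrix (Fin m) (Fin r) ℝ := W * V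
    let K : Matrix (Fin n) (Fin r) ℝ := (Uᵀ * W)ᵀ
    let Z : Matrix (Fin r) (Fin r) ℝ := Uᵀ * W * V
    W = H * Vᵀ + U * Kᵀ - U * Z * Vᵀ ∧
    norm21 H ≤ Real.sqrt (μ * r / n) ∧
    norm21 K ≤ Real.sqrt (μ * r / m) ∧
    Real.sqrt (∑ a, ∑ b, (Z a b) ^ 2) ≤ μ * r / Real.sqrt (m * n) := by
  intro H K Z
  obtain ⟨H₀, K₀, hW0⟩ := hW
  have hm' : (0:ℝ) < m := Nat.cast_pos.mpr hm
  have hn' : (0:ℝ) < n := Nat.cast_pos.mpr hn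
  have hμ : 0 ≤ μ * r := by
    have h0 : (0:ℝ) ≤ ∑ c, (U ⟨0, hm⟩ c) ^ 2 := Finset.sum_nonneg fun _ _ => sq_nonneg _
    have h1 : 0 ≤ μ * r / m := le_trans h0 (hUinc _)
    calc (0:ℝ) ≤ (μ * r / m) * m := mul_nonneg h1 hm'.le
      _ = μ * r := div_mul_cancel₀ _ hm'.ne'
  have hsn : (0:ℝ) ≤ Real.sqrt (μ * r / n) := Real.sqrt_nonneg _
  have hsm : (0:ℝ) ≤ Real.sqrt (μ * r / m) := Real.sqrt_nonneg _
  have hW1' : 0 ≤ l1norm W :=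
    Finset.sum_nonneg fun _ _ => Finset.sum_nonneg fun _ _ => abs_nonneg _
  refine ⟨?_, ?_, ?_, ?_⟩
  · -- decomposition identity
    show W = (W * V) * Vᵀ + U * ((Uᵀ * W)ᵀ)ᵀ - U * (Uᵀ * W * V) * Vᵀ
    have hVV : ∀ (A : Matrix (Fin m) (Fin r) ℝ), A * Vᵀ * V = A := fun A => by
      rw [Matrix.mul_assoc, hV, Matrix.mul_one]
    have hVV' : ∀ (A : Matrix (Fin r) (Fin r) ℝ), A * Vᵀ * V = A := fun A => by
      rw [Matrix.mul_assoc, hV, Matrix.mul_one]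
    have eH : W * V = H₀ + U * (K₀ᵀ * V) := by
      rw [hW0, Matrix.add_mul, hVV, Matrix.mul_assoc]
    have eUW : Uᵀ * W = Uᵀ * H₀ * Vᵀ + K₀ᵀ := by
      rw [hW0, Matrix.mul_add, ← Matrix.mul_assoc, ← Matrix.mul_assoc, hU, Matrix.one_mul]
    have eZ : Uᵀ * W * V = Uᵀ * H₀ + K₀ᵀ * V := by
      rw [eUW, Matrix.add_mul, hVV']
    rw [transpose_transpose, eH, eZ, eUW, hW0]
    simp only [Matrix.add_mul, Matrix.mul_add, Matrix.mul_assoc]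
    abel
  · -- bound on H
    calc norm21 H
        = ∑ i, Real.sqrt (∑ c, (∑ j, W i j * V j c) ^ 2) := by
          simp only [norm21, H, Matrix.mul_apply]
      _ ≤ ∑ i, ∑ j, Real.sqrt (∑ c, (W i j * V j c) ^ 2) :=
          Finset.sum_le_sum fun i _ =>
            sqrt_sum_sq_sum_le Finset.univ (fun j c => W i j * V j c)
      _ = ∑ i, ∑ j, |W i j| * Real.sqrt (∑ c, (V j c) ^ 2) :=
          Finset.sum_congr rfl fun i _ => Finset.sum_congr rfl fun j _ =>
            sqrt_sum_sq_mul (W i j) (V j)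
      _ ≤ ∑ i, ∑ j, |W i j| * Real.sqrt (μ * r / n) :=
          Finset.sum_le_sum fun i _ => Finset.sum_le_sum fun j _ =>
            mul_le_mul_of_nonneg_left (Real.sqrt_le_sqrt (hVinc j)) (abs_nonneg _)
      _ = l1norm W * Real.sqrt (μ * r / n) := by
          rw [l1norm, Finset.sum_mul]
          exact Finset.sum_congr rfl fun i _ => by rw [Finset.sum_mul]
      _ ≤ 1 * Real.sqrt (μ * r / n) := mul_le_mul_of_nonneg_right hW1 hsn
      _ = Real.sqrt (μ * r / n) := one_mul _
  · -- bound on K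
    calc norm21 K
        = ∑ j, Real.sqrt (∑ c, (∑ i, W i j * U i c) ^ 2) := by
          simp only [norm21, K, Matrix.transpose_apply, Matrix.mul_apply]
          refine Finset.sum_congr rfl fun j _ => ?_
          congr 1
          refine Finset.sum_congr rfl fun c _ => ?_
          congr 1
          exact Finset.sum_congr rfl fun i _ => mul_comm _ _
      _ ≤ ∑ j, ∑ i, Real.sqrt (∑ c, (W i j * U i c) ^ 2) :=
          Finset.sum_le_sum fun j _ =>
            sqrt_sum_sq_sum_le Finset.univ (fun i c => W i j * U i c)
      _ = ∑ j, ∑ i, |W i j| * Real.sqrt (∑ c, (U i c) ^ 2) :=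
          Finset.sum_congr rfl fun j _ => Finset.sum_congr rfl fun i _ =>
            sqrt_sum_sq_mul (W i j) (U i)
      _ ≤ ∑ j, ∑ i, |W i j| * Real.sqrt (μ * r / m) :=
          Finset.sum_le_sum fun j _ => Finset.sum_le_sum fun i _ =>
            mul_le_mul_of_nonneg_left (Real.sqrt_le_sqrt (hUinc i)) (abs_nonneg _)
      _ = l1norm W * Real.sqrt (μ * r / m) := by
          rw [l1norm, Finset.sum_mul, Finset.sum_comm]
          exact Finset.sum_congr rfl fun i _ => by rw [Finset.sum_mul]
      _ ≤ 1 * Real.sqrt (μ * r / m) := mul_le_mul_of_nonneg_right hW1 hsm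
      _ = Real.sqrt (μ * r / m) := one_mul _
  · -- bound on Z
    have key : Real.sqrt (∑ a, ∑ b, (Z a b) ^ 2)
        ≤ l1norm W * (Real.sqrt (μ * r / m) * Real.sqrt (μ * r / n)) := by
      have hZ : ∀ q : Fin r × Fin r, Z q.1 q.2
          = ∑ p ∈ (Finset.univ : Finset (Fin m × Fin n)), W p.1 p.2 * (U p.1 q.1 * V p.2 q.2) := by
        intro q
        rw [show Z q.1 q.2 = (Uᵀ * W * V) q.1 q.2 from rfl, Matrix.mul_apply]
        rw [Fintype.sum_prod_type]
        rw [Finset.sum_comm]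
        refine Finset.sum_congr rfl fun j _ => ?_
        rw [Matrix.mul_apply, Finset.sum_mul]
        exact Finset.sum_congr rfl fun i _ => by rw [Matrix.transpose_apply]; ring
      calc Real.sqrt (∑ a, ∑ b, (Z a b) ^ 2)
          = Real.sqrt (∑ q : Fin r × Fin r,
              (∑ p ∈ (Finset.univ : Finset (Fin m × Fin n)),
                W p.1 p.2 * (U p.1 q.1 * V p.2 q.2)) ^ 2) := by
            congr 1
            rw [Fintype.sum_prod_type (f := fun q : Fin r × Fin r =>
              (∑ p ∈ (Finset.univ : Finset (Fin m × Fin n)),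
                W p.1 p.2 * (U p.1 q.1 * V p.2 q.2)) ^ 2)]
            exact Finset.sum_congr rfl fun a _ => Finset.sum_congr rfl fun b _ =>
              by rw [← hZ (a, b)]
        _ ≤ ∑ p ∈ (Finset.univ : Finset (Fin m × Fin n)),
              Real.sqrt (∑ q : Fin r × Fin r, (W p.1 p.2 * (U p.1 q.1 * V p.2 q.2)) ^ 2) :=
            by apply sqrt_sum_sq_sum_le
        _ = ∑ p : Fin m × Fin n, |W p.1 p.2| *
              Real.sqrt (∑ q : Fin r × Fin r, (U p.1 q.1 * V p.2 q.2) ^ 2) :=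
            by
              refine Finset.sum_congr rfl fun p _ => ?_
              rw [show ∑ q : Fin r × Fin r, (W p.1 p.2 * (U p.1 q.1 * V p.2 q.2)) ^ 2
                  = (W p.1 p.2) ^ 2 * ∑ q : Fin r × Fin r, (U p.1 q.1 * V p.2 q.2) ^ 2 from by
                rw [Finset.mul_sum]
                exact Finset.sum_congr rfl fun q _ => by ring]
              rw [Real.sqrt_mul (sq_nonneg _), Real.sqrt_sq_eq_abs]
        _ ≤ ∑ p : Fin m × Fin n, |W p.1 p.2| *
              (Real.sqrt (μ * r / m) * Real.sqrt (μ * r / n)) := by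
            refine Finset.sum_le_sum fun p _ => mul_le_mul_of_nonneg_left ?_ (abs_nonneg _)
            have e1 : ∑ q : Fin r × Fin r, (U p.1 q.1 * V p.2 q.2) ^ 2
                = (∑ a, (U p.1 a) ^ 2) * (∑ b, (V p.2 b) ^ 2) := by
              rw [Fintype.sum_prod_type, Finset.sum_mul]
              refine Finset.sum_congr rfl fun a _ => ?_
              rw [Finset.mul_sum]
              exact Finset.sum_congr rfl fun b _ => by ring
            rw [e1, Real.sqrt_mul (Finset.sum_nonneg fun _ _ => sq_nonneg _)]
            exact mul_le_mul (Real.sqrt_le_sqrt (hUinc p.1)) (Real.sqrt_le_sqrt (hVinc p.2))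
              (Real.sqrt_nonneg _) hsm
        _ = l1norm W * (Real.sqrt (μ * r / m) * Real.sqrt (μ * r / n)) := by
            rw [l1norm, Fintype.sum_prod_type, Finset.sum_mul]
            exact Finset.sum_congr rfl fun i _ => by rw [Finset.sum_mul]
    have hprod : Real.sqrt (μ * r / m) * Real.sqrt (μ * r / n)
        = μ * r / Real.sqrt (m * n) := by
      rw [← Real.sqrt_mul (div_nonneg hμ hm'.le)]
      rw [show μ * r / m * (μ * r / n) = (μ * r) ^ 2 / (m * n) by ring]
      rw [Real.sqrt_div (sq_nonneg _), Real.sqrt_sq hμ]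
    calc Real.sqrt (∑ a, ∑ b, (Z a b) ^ 2)
        ≤ l1norm W * (Real.sqrt (μ * r / m) * Real.sqrt (μ * r / n)) := key
      _ ≤ 1 * (Real.sqrt (μ * r / m) * Real.sqrt (μ * r / n)) :=
          mul_le_mul_of_nonneg_right hW1 (mul_nonneg hsm hsn)
      _ = μ * r / Real.sqrt (m * n) := by rw [one_mul, hprod]
end

section
/- Suppose (X*, Y*) ∈ L (true factorizations with k = r) and the first-order optimality certificate holds: there exists ε > 0 with ‖P_Ω(W)‖₁ ≤ ((1−ε)/2)‖W‖₁ for all W ∈ T, and Λ ∈ sign(−S) with ‖P_{Ω^c}(Λ)‖_∞ ≤ 1−ε, ΛV = 0, ΛᵀU = 0. Then for any Δ = Δ₁ + Δ₂ with Δ₁ ∈ T, f(X,Y) − f(X*,Y*) ≥ (ε/2)‖Δ₁‖₁ − ‖Δ₂‖₁, where Δ = XYᵀ − X*(Y*)ᵀ and f(X,Y) = ‖XYᵀ − L − S‖₁. -/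
open Matrix

/-- quadratic-versus-linear growth estimate.  Given the restricted ℓ¹
bound on the tangent space `T` and a dual certificate `Λ`, any decomposition
`XYᵀ - X⋆Y⋆ᵀ = Δ₁ + Δ₂` with `Δ₁ ∈ T` satisfies
`f(X,Y) - f(X⋆,Y⋆) ≥ (ε/2)‖Δ₁‖₁ - ‖Δ₂‖₁`, where `f(X,Y) = ‖XYᵀ - L - S‖₁`. -/
theorem growth_lower_bound
    {m n r : ℕ}
    (U : Matrix (Fin m) (Fin r) ℝ) (Sig : Matrix (Fin r) (Fin r) ℝ)
    (V : Matrix (Fin n) (Fin r) ℝ)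
    (hU : Uᵀ * U = 1) (hV : Vᵀ * V = 1)
    (L : Matrix (Fin m) (Fin n) ℝ)
    (hL : L = U * Sig * Vᵀ) (hrank : L.rank = r)
    (Ω : Set (Fin m × Fin n))
    (ε : ℝ) (hε : 0 < ε)
    (hbound : ∀ (H : Matrix (Fin m) (Fin r) ℝ) (K : Matrix (Fin n) (Fin r) ℝ),
      l1norm (projOn Ω (H * Vᵀ + U * Kᵀ)) ≤ (1 - ε) / 2 * l1norm (H * Vᵀ + U * Kᵀ))
    (S : Matrix (Fin m) (Fin n) ℝ)
    (hS : ∀ i j, (i, j) ∉ Ω → S i j = 0)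
    (Λ : Matrix (Fin m) (Fin n) ℝ)
    (hΛsign : ∀ i j, S i j ≠ 0 → Λ i j = Real.sign (-(S i j)))
    (hΛ1 : ∀ i j, |Λ i j| ≤ 1)
    (hΛoff : ∀ i j, (i, j) ∉ Ω → |Λ i j| ≤ 1 - ε)
    (hΛV : Λ * V = 0) (hΛU : Λᵀ * U = 0)
    (Xs : Matrix (Fin m) (Fin r) ℝ) (Ys : Matrix (Fin n) (Fin r) ℝ)
    (hXsYs : Xs * Ysᵀ = L)
    (X : Matrix (Fin m) (Fin r) ℝ) (Y : Matrix (Fin n) (Fin r) ℝ)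
    (Δ₁ Δ₂ : Matrix (Fin m) (Fin n) ℝ)
    (hΔ : X * Yᵀ - Xs * Ysᵀ = Δ₁ + Δ₂)
    (hΔ₁ : ∃ (H : Matrix (Fin m) (Fin r) ℝ) (K : Matrix (Fin n) (Fin r) ℝ),
        Δ₁ = H * Vᵀ + U * Kᵀ) :
    l1norm (X * Yᵀ - (L + S)) - l1norm (Xs * Ysᵀ - (L + S))
      ≥ ε / 2 * l1norm Δ₁ - l1norm Δ₂ := by
  classical
  obtain ⟨H, K, hHK⟩ := hΔ₁
  -- inner product of Λ with Δ₁ vanishes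
  have h1 : ∀ i k, ∑ j, Λ i j * V j k = 0 := by
    intro i k
    have := congrFun (congrFun hΛV i) k
    simpa [Matrix.mul_apply] using this
  have h2 : ∀ j k, ∑ i, Λ i j * U i k = 0 := by
    intro j k
    have := congrFun (congrFun hΛU j) k
    simpa [Matrix.mul_apply, Matrix.transpose_apply] using this
  have hA : ∑ i, ∑ j, Λ i j * (H * Vᵀ) i j = 0 := by
    simp only [Matrix.mul_apply, Matrix.transpose_apply, Finset.mul_sum]
    calc ∑ i, ∑ j, ∑ k, Λ i j * (H i k * V j k)
        = ∑ i, ∑ k, ∑ j, Λ i j * (H i k * V j k) :=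
          Finset.sum_congr rfl fun i _ => Finset.sum_comm
      _ = ∑ i, ∑ k, H i k * ∑ j, Λ i j * V j k := by
          refine Finset.sum_congr rfl fun i _ => Finset.sum_congr rfl fun k _ => ?_
          rw [Finset.mul_sum]
          exact Finset.sum_congr rfl fun j _ => by ring
      _ = 0 := by simp [h1]
  have hB : ∑ i, ∑ j, Λ i j * (U * Kᵀ) i j = 0 := by
    simp only [Matrix.mul_apply, Matrix.transpose_apply, Finset.mul_sum]
    calc ∑ i, ∑ j, ∑ k, Λ i j * (U i k * K j k)
        = ∑ j, ∑ i, ∑ k, Λ i j * (U i k * K j k) := Finset.sum_comm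
      _ = ∑ j, ∑ k, ∑ i, Λ i j * (U i k * K j k) :=
          Finset.sum_congr rfl fun j _ => Finset.sum_comm
      _ = ∑ j, ∑ k, K j k * ∑ i, Λ i j * U i k := by
          refine Finset.sum_congr rfl fun j _ => Finset.sum_congr rfl fun k _ => ?_
          rw [Finset.mul_sum]
          exact Finset.sum_congr rfl fun i _ => by ring
      _ = 0 := by simp [h2]
  have hIP : ∑ i, ∑ j, Λ i j * Δ₁ i j = 0 := by
    rw [hHK]
    simp only [Matrix.add_apply, mul_add, Finset.sum_add_distrib]
    rw [hA, hB, add_zero]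
  -- Λ i j * S i j = -|S i j|
  have hΛS : ∀ i j, Λ i j * S i j = -|S i j| := by
    intro i j
    by_cases h : S i j = 0
    · simp [h]
    · rw [hΛsign i j h]
      rcases lt_trichotomy (S i j) 0 with hlt | heq | hgt
      · rw [Real.sign_of_pos (by linarith : (0:ℝ) < -(S i j)), abs_of_neg hlt]; ring
      · exact absurd heq h
      · rw [Real.sign_of_neg (by linarith : -(S i j) < (0:ℝ)), abs_of_pos hgt]; ring
  -- pointwise key inequality
  have key : ∀ i j, (if (i,j) ∈ Ω then (0:ℝ) else ε * |Δ₁ i j|) - |Δ₂ i j|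
      ≤ |Δ₁ i j + Δ₂ i j - S i j| - |S i j| - Λ i j * Δ₁ i j := by
    intro i j
    by_cases hij : (i,j) ∈ Ω
    · simp only [hij, if_true]
      have hb1 : Λ i j * (Δ₁ i j + Δ₂ i j - S i j) ≤ |Δ₁ i j + Δ₂ i j - S i j| := by
        refine (le_abs_self _).trans ?_
        rw [abs_mul]
        exact mul_le_of_le_one_left (abs_nonneg _) (hΛ1 i j)
      rw [mul_sub, mul_add] at hb1
      have hb2 : |Λ i j * Δ₂ i j| ≤ |Δ₂ i j| := by
        rw [abs_mul]
        exact mul_le_of_le_one_left (abs_nonneg _) (hΛ1 i j)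
      have hb2' := (abs_le.mp hb2).1
      have hb3 := hΛS i j
      linarith
    · rw [hS i j hij, if_neg hij]
      have hb4 : |Λ i j * Δ₁ i j| ≤ (1 - ε) * |Δ₁ i j| := by
        rw [abs_mul]
        exact mul_le_mul_of_nonneg_right (hΛoff i j hij) (abs_nonneg _)
      have hb4' := (abs_le.mp hb4).2
      have hb5 : |Δ₁ i j| ≤ |Δ₁ i j + Δ₂ i j| + |Δ₂ i j| := by
        have := abs_add_le (Δ₁ i j + Δ₂ i j) (-Δ₂ i j)
        simpa using this
      have h0 : |Δ₁ i j + Δ₂ i j - 0| = |Δ₁ i j + Δ₂ i j| := by norm_num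
      rw [h0]
      simp only [abs_zero]
      linarith
  -- rewrite the two l1norms
  have hXY : X * Yᵀ - (L + S) = Δ₁ + Δ₂ - S := by
    have h : X * Yᵀ = Xs * Ysᵀ + (Δ₁ + Δ₂) := by rw [← hΔ]; abel
    rw [h, hXsYs]; abel
  have hXsS : Xs * Ysᵀ - (L + S) = -S := by rw [hXsYs]; abel
  have e1 : l1norm (X * Yᵀ - (L + S)) = ∑ i, ∑ j, |Δ₁ i j + Δ₂ i j - S i j| := by
    rw [hXY]; simp [l1norm, Matrix.sub_apply, Matrix.add_apply]
  have e2 : l1norm (Xs * Ysᵀ - (L + S)) = ∑ i, ∑ j, |S i j| := by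
    rw [hXsS]; simp [l1norm, Matrix.neg_apply]
  -- sum the key inequality
  have hsum : ∑ i, ∑ j, ((if (i,j) ∈ Ω then (0:ℝ) else ε * |Δ₁ i j|) - |Δ₂ i j|)
      ≤ ∑ i, ∑ j, (|Δ₁ i j + Δ₂ i j - S i j| - |S i j| - Λ i j * Δ₁ i j) :=
    Finset.sum_le_sum fun i _ => Finset.sum_le_sum fun j _ => key i j
  set A := ∑ i, ∑ j, |Δ₁ i j + Δ₂ i j - S i j| with hAdef
  set B := ∑ i, ∑ j, |S i j| with hBdef
  set C := ∑ i, ∑ j, |Δ₁ i j| with hCdef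
  set Dn := ∑ i, ∑ j, |Δ₂ i j| with hDdef
  set E := ∑ i, ∑ j, (if (i,j) ∈ Ω then |Δ₁ i j| else 0) with hEdef
  have hRHS : ∑ i, ∑ j, ((if (i,j) ∈ Ω then (0:ℝ) else ε * |Δ₁ i j|) - |Δ₂ i j|)
      = ε * C - ε * E - Dn := by
    have hpt : ∀ i j, (if (i,j) ∈ Ω then (0:ℝ) else ε * |Δ₁ i j|) - |Δ₂ i j|
        = ε * |Δ₁ i j| - ε * (if (i,j) ∈ Ω then |Δ₁ i j| else 0) - |Δ₂ i j| := by
      intro i j; by_cases h : (i,j) ∈ Ω <;> simp [h]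
    simp only [hpt, Finset.sum_sub_distrib, ← Finset.mul_sum]
    rfl
  have hLHS : ∑ i, ∑ j, (|Δ₁ i j + Δ₂ i j - S i j| - |S i j| - Λ i j * Δ₁ i j)
      = A - B := by
    simp only [Finset.sum_sub_distrib]
    rw [hIP]
    ring
  rw [hRHS, hLHS] at hsum
  have hE : E ≤ (1 - ε) / 2 * C := by
    have hb := hbound H K
    rw [← hHK] at hb
    have hPE : l1norm (projOn Ω Δ₁) = E := by
      simp [l1norm, projOn, apply_ite abs, hEdef]
    have hC1 : l1norm Δ₁ = C := rfl
    rw [hPE, hC1] at hb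
    exact hb
  have hC0 : (0:ℝ) ≤ C := Finset.sum_nonneg fun i _ => Finset.sum_nonneg fun j _ => abs_nonneg _
  have e3 : l1norm Δ₁ = C := rfl
  have e4 : l1norm Δ₂ = Dn := rfl
  rw [e1, e2, e3, e4]
  have hεE : ε * E ≤ ε * ((1 - ε) / 2 * C) := mul_le_mul_of_nonneg_left hE hε.le
  nlinarith [mul_nonneg (mul_nonneg hε.le hε.le) hC0, mul_nonneg hε.le hC0]
end
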